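/- Suppose real numbers a_0,…,c_2 satisfy the defining conditions of Δ_Bur^6 (in particular 0 ≤ a_i,b_i,c_i ≤ 1/2 and Σ_{i=0}^{2}(a_i+b_i+c_i)=3, with a_3,b_3,c_3 ∈ [0,1/2] as defined) together with a_1+b_1+c_1 ≤ 1 and the strict inequality a_0+a_1+a_2+b_1 < 1. Then a contradiction follows; i.e., the matroid polytope {a_0+a_1+a_2+b_1 ≤ 1, a_1+a_2+c_3 ≤ 1, b_0+b_1 ≤ 1} meets Δ_Bur^5 only in the locus where a_0+a_1+a_2+b_1 = 1. -/

import Mathlib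

/-- The degree-6 Burniat polytope Δ_Bur^6 ⊂ ℝ⁹. -/
def BurPoly6 (a0 a1 a2 b0 b1 b2 c0 c1 c2 : ℝ) : Prop :=
  (0 ≤ a0 ∧ a0 ≤ 1/2) ∧ (0 ≤ a1 ∧ a1 ≤ 1/2) ∧ (0 ≤ a2 ∧ a2 ≤ 1/2) ∧
  (0 ≤ b0 ∧ b0 ≤ 1/2) ∧ (0 ≤ b1 ∧ b1 ≤ 1/2) ∧ (0 ≤ b2 ∧ b2 ≤ 1/2) ∧
  (0 ≤ c0 ∧ c0 ≤ 1/2) ∧ (0 ≤ c1 ∧ c1 ≤ 1/2) ∧ (0 ≤ c2 ∧ c2 ≤ 1/2) ∧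
  a0 + a1 + a2 + b0 + b1 + b2 + c0 + c1 + c2 = 3 ∧
  (0 ≤ c0 + c1 + c2 + b0 - 1 ∧ c0 + c1 + c2 + b0 - 1 ≤ 1/2) ∧
  (0 ≤ a0 + a1 + a2 + c0 - 1 ∧ a0 + a1 + a2 + c0 - 1 ≤ 1/2) ∧
  (0 ≤ b0 + b1 + b2 + a0 - 1 ∧ b0 + b1 + b2 + a0 - 1 ≤ 1/2)

-- On the hyperplane `Σ = 3` the left side equals `2 - a₃ - b₂`, and `a₃, b₂ ≤ 1/2`.
theorem BurPoly6.one_le_a0_add_a1_add_a2_add_b1 {a0 a1 a2 b0 b1 b2 c0 c1 c2 : ℝ}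
    (h : BurPoly6 a0 a1 a2 b0 b1 b2 c0 c1 c2) : 1 ≤ a0 + a1 + a2 + b1 := by
  obtain ⟨-, -, -, -, -, ⟨-, hb2⟩, -, -, -, hsum, ⟨-, ha3⟩, -, -⟩ := h
  linarith

theorem no_strict_point_general (a0 a1 a2 b0 b1 b2 c0 c1 c2 : ℝ)
    (h6 : BurPoly6 a0 a1 a2 b0 b1 b2 c0 c1 c2)
    (hlt : a0 + a1 + a2 + b1 < 1) : False :=
  hlt.not_ge h6.one_le_a0_add_a1_add_a2_add_b1

/-- A point of Δ_Bur^6 satisfying a₁+b₁+c₁ ≤ 1 cannot satisfy the strict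
inequality a₀+a₁+a₂+b₁ < 1. -/
theorem no_strict_point (a0 a1 a2 b0 b1 b2 c0 c1 c2 : ℝ)
    (h6 : BurPoly6 a0 a1 a2 b0 b1 b2 c0 c1 c2)
    (h5 : a1 + b1 + c1 ≤ 1)
    (hlt : a0 + a1 + a2 + b1 < 1) : False :=
  no_strict_point_general a0 a1 a2 b0 b1 b2 c0 c1 c2 h6 hlt
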